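/- arXiv:1411.0735 — 4 statements merged into one kernel-verified Lean document; each statement's English description precedes it below -/
import Mathlib

section
/- Let 𝒦 be a finite set and 𝒯, 𝒵 countable sets, and let ε, δ ∈ [0,1). Let P be a pmf on 𝒦×𝒦×𝒦×𝒯×𝒵 with coordinates denoted (K, Kx, Ky, F, Z) such that Pr_P[K = Kx = Ky] ≥ 1 − ε and d(P_{KFZ}, P_unif × P_{FZ}) ≤ δ. Then there exists a pmf Q on 𝒦×𝒦×𝒦×𝒦×𝒯×𝒵 with coordinates (K′, K, Kx, Ky, F, Z) whose marginal on (K, Kx, Ky, F, Z) equals P, such that Q_{K′FZ} = P_unif × P_{FZ} (exact uniformity and independence) and Pr_Q[K′ = Kx = Ky] ≥ 1 − ε − δ. (Conversion of an (ε,δ)-secret key into an (ε+δ,0)-secret key of the same length.) -/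
open scoped BigOperators

noncomputable section

/-- Probability of a set under a pmf. -/
def probOf {α : Type*} (P : α → ℝ) (S : Set α) : ℝ := ∑' a : S, P a

/-- `P` is a probability mass function. -/
def IsPMF {α : Type*} (P : α → ℝ) : Prop := (∀ a, 0 ≤ P a) ∧ ∑' a, P a = 1

/-- Variational distance between two pmfs. -/
def tvDist {α : Type*} (P Q : α → ℝ) : ℝ := (1 / 2) * ∑' a, |P a - Q a|

/-!
Conditionally on each value `q` of `(F, Z)`, couple `K` maximally with a uniform key `K'`, and
let `K'` depend on `(K, Kx, Ky, F, Z)` only through `(K, F, Z)`. Then `(K', F, Z)` has law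
`P_unif × P_{FZ}` exactly, and the coupling puts mass `∑ₖ min (P_{KFZ}(k, q)) (P_{FZ}(q) / |𝒦|)`
on `K' = K`; summed over `q` this is `1 - d(P_{KFZ}, P_unif × P_{FZ}) ≥ 1 - δ`. A union bound
with `Pr[K = Kx = Ky] ≥ 1 - ε` gives the claim.
-/

section Summation

variable {α β : Type*} [Fintype α]

lemma tsum_prod_eq_tsum_sum {f : α × β → ℝ} (hf : Summable f) :
    ∑' p, f p = ∑' b, ∑ a, f (a, b) := by
  rw [hf.tsum_prod' hf.prod_factor, tsum_fintype]
  exact (Summable.tsum_finsetSum fun a _ => hf.prod_factor a).symm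

lemma summable_prod_of_nonneg_of_fintype {f : α × β → ℝ} (hf : 0 ≤ f)
    (h : ∀ a, Summable fun b => f (a, b)) : Summable f :=
  (summable_prod_of_nonneg hf).2 ⟨h, .of_finite⟩

lemma sum_inv_card_mul_sum (f : α → ℝ) :
    ∑ _a : α, (Fintype.card α : ℝ)⁻¹ * ∑ a, f a = ∑ a, f a := by
  rcases isEmpty_or_nonempty α with hα | hα
  · simp
  · simp [Finset.card_univ]

end Summation

def prodAssocLast (α β γ δ : Type*) : (α × β × γ) × δ ≃ α × β × γ × δ where
  toFun p := (p.1.1, p.1.2.1, p.1.2.2, p.2)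
  invFun w := ((w.1, w.2.1, w.2.2.1), w.2.2.2)
  left_inv _ := rfl
  right_inv _ := rfl

lemma tsum_eq_tsum_sum_sum_sum {α β γ δ : Type*} [Fintype α] [Fintype β] [Fintype γ]
    {f : α × β × γ × δ → ℝ} (hf : Summable f) :
    ∑' w, f w = ∑' d, ∑ a, ∑ b, ∑ c, f (a, b, c, d) := by
  let e := prodAssocLast α β γ δ
  rw [← e.tsum_eq, tsum_prod_eq_tsum_sum (f := fun p => f (e p)) (e.summable_iff.2 hf)]
  simp only [Fintype.sum_prod_type]
  rfl

section Probability

variable {α : Type*}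

lemma probOf_eq_tsum_indicator (P : α → ℝ) (S : Set α) :
    probOf P S = ∑' a, S.indicator P a :=
  tsum_subtype S P

lemma IsPMF.summable {P : α → ℝ} (hP : IsPMF P) : Summable P := by
  by_contra h
  simpa [tsum_eq_zero_of_not_summable h] using hP.2

lemma IsPMF.probOf_add_probOf_sub_one_le {P : α → ℝ} (hP : IsPMF P) {A B C : Set α}
    (hABC : A ∩ B ⊆ C) : probOf P A + probOf P B - 1 ≤ probOf P C := by
  have hS := hP.summable
  have hpoint : ∀ a, A.indicator P a + B.indicator P a ≤ C.indicator P a + P a := by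
    intro a
    have hC : 0 ≤ C.indicator P a := Set.indicator_nonneg (fun a _ => hP.1 a) a
    by_cases hA : a ∈ A <;> by_cases hB : a ∈ B
    · simp [hA, hB, Set.indicator_of_mem (hABC ⟨hA, hB⟩)]
    all_goals
      simp only [Set.indicator_of_mem, Set.indicator_of_notMem, hA, hB, not_false_eq_true]
      linarith [hP.1 a]
  have hle := Summable.tsum_le_tsum hpoint ((hS.indicator A).add (hS.indicator B))
    ((hS.indicator C).add hS)
  rw [(hS.indicator A).tsum_add (hS.indicator B), (hS.indicator C).tsum_add hS, hP.2] at hle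
  simp only [probOf_eq_tsum_indicator]
  linarith

lemma probOf_preimage_snd {β : Type*} [Fintype β] {Q : β × α → ℝ} (hQ : Summable Q)
    {P : α → ℝ} (hQP : ∀ a, ∑ b, Q (b, a) = P a) (S : Set α) :
    probOf Q (Prod.snd ⁻¹' S) = probOf P S := by
  rw [probOf_eq_tsum_indicator, probOf_eq_tsum_indicator, tsum_prod_eq_tsum_sum (hQ.indicator _)]
  congr 1
  ext a
  by_cases ha : a ∈ S <;> simp [Set.indicator, ha, hQP]

lemma probOf_fst_eq_fst_snd {β : Type*} [Fintype α] {Q : α × α × β → ℝ}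
    (hQ : Summable Q) : probOf Q {p | p.1 = p.2.1} = ∑' x, Q (x.1, x) := by
  classical
  rw [probOf_eq_tsum_indicator, tsum_prod_eq_tsum_sum (hQ.indicator _)]
  congr 1
  ext x
  simp [Set.indicator, Finset.sum_ite_eq']

end Probability

section MaximalCoupling

variable {ι : Type*} [Fintype ι] {a b : ι → ℝ}

lemma sum_min_eq_sub_half_sum_abs_sub (h : ∑ i, a i = ∑ i, b i) :
    ∑ i, min (a i) (b i) = ∑ i, a i - 2⁻¹ * ∑ i, |a i - b i| := by
  have hmin : ∀ x y : ℝ, min x y = 2⁻¹ * (x + y - |x - y|) := by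
    intro x y
    rcases le_total x y with hxy | hxy
    · rw [min_eq_left hxy, abs_of_nonpos (sub_nonpos.2 hxy)]; ring
    · rw [min_eq_right hxy, abs_of_nonneg (sub_nonneg.2 hxy)]; ring
  simp only [hmin, ← Finset.mul_sum, Finset.sum_sub_distrib, Finset.sum_add_distrib, ← h]
  ring

lemma sum_sub_min_right_eq (h : ∑ i, a i = ∑ i, b i) :
    ∑ i, (b i - min (a i) (b i)) = ∑ i, (a i - min (a i) (b i)) := by
  simp only [Finset.sum_sub_distrib, h]

lemma sub_min_mul_sub_min_div_nonneg (i j : ι) :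
    0 ≤ (a i - min (a i) (b i)) * (b j - min (a j) (b j)) / ∑ l, (a l - min (a l) (b l)) :=
  div_nonneg (mul_nonneg (sub_nonneg.2 (min_le_left _ _)) (sub_nonneg.2 (min_le_right _ _)))
    (Finset.sum_nonneg fun _ _ => sub_nonneg.2 (min_le_left _ _))

variable [DecidableEq ι]

variable (a b) in
/-- Keeps the common mass `min (a i) (b i)` on the diagonal and spreads the residuals
`a - min a b` and `b - min a b`, which have the same total, as a normalised product. -/
def maximalCoupling (i j : ι) : ℝ :=
  (if i = j then min (a i) (b i) else 0) +
    (a i - min (a i) (b i)) * (b j - min (a j) (b j)) / ∑ l, (a l - min (a l) (b l))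

lemma maximalCoupling_nonneg (ha : 0 ≤ a) (hb : 0 ≤ b) (i j : ι) :
    0 ≤ maximalCoupling a b i j := by
  refine add_nonneg ?_ (sub_min_mul_sub_min_div_nonneg i j)
  split_ifs
  exacts [le_min (ha i) (hb i), le_rfl]

lemma min_le_maximalCoupling_self (i : ι) : min (a i) (b i) ≤ maximalCoupling a b i i := by
  rw [maximalCoupling, if_pos rfl]
  exact le_add_of_nonneg_right (sub_min_mul_sub_min_div_nonneg i i)

lemma maximalCoupling_comm (h : ∑ i, a i = ∑ i, b i) (i j : ι) :
    maximalCoupling b a j i = maximalCoupling a b i j := by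
  simp only [maximalCoupling, min_comm (b _), sum_sub_min_right_eq h, eq_comm (a := j), mul_comm]
  by_cases hij : i = j
  · subst hij; rfl
  · simp [hij]

lemma sum_maximalCoupling_right (h : ∑ i, a i = ∑ i, b i) (i : ι) :
    ∑ j, maximalCoupling a b i j = a i := by
  simp only [maximalCoupling, Finset.sum_add_distrib, Finset.sum_ite_eq, Finset.mem_univ,
    if_true, ← Finset.sum_div, ← Finset.mul_sum, sum_sub_min_right_eq h]
  by_cases hD : ∑ l, (a l - min (a l) (b l)) = 0
  · have hi : a i - min (a i) (b i) = 0 :=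
      (Finset.sum_eq_zero_iff_of_nonneg fun l _ => sub_nonneg.2 (min_le_left _ _)).1 hD i
        (Finset.mem_univ i)
    rw [hi, zero_mul, zero_div]
    linarith
  · field_simp
    ring

lemma sum_maximalCoupling_left (h : ∑ i, a i = ∑ i, b i) (j : ι) :
    ∑ i, maximalCoupling a b i j = b j := by
  simp only [← maximalCoupling_comm h]
  exact sum_maximalCoupling_right h.symm j

end MaximalCoupling

section Gluing

variable {K T Z : Type*} [Fintype K] {P : K × K × K × T × Z → ℝ}

variable (P) in
def keyMarginal (k : K) (q : T × Z) : ℝ := ∑ kx, ∑ ky, P (k, kx, ky, q)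

lemma keyMarginal_nonneg (hP : ∀ w, 0 ≤ P w) (k : K) (q : T × Z) : 0 ≤ keyMarginal P k q :=
  Finset.sum_nonneg fun _ _ => Finset.sum_nonneg fun _ _ => hP _

lemma le_keyMarginal (hP : ∀ w, 0 ≤ P w) (w : K × K × K × T × Z) :
    P w ≤ keyMarginal P w.1 w.2.2.2 :=
  calc P w ≤ ∑ ky, P (w.1, w.2.1, ky, w.2.2.2) :=
        Finset.single_le_sum (f := fun ky => P (w.1, w.2.1, ky, w.2.2.2)) (fun _ _ => hP _)
          (Finset.mem_univ w.2.2.1)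
    _ ≤ keyMarginal P w.1 w.2.2.2 :=
        Finset.single_le_sum (f := fun kx => ∑ ky, P (w.1, kx, ky, w.2.2.2))
          (fun _ _ => Finset.sum_nonneg fun _ _ => hP _) (Finset.mem_univ w.2.1)

lemma summable_keyMarginal (hP : Summable P) (k : K) : Summable (keyMarginal P k) :=
  summable_sum fun kx _ => summable_sum fun ky _ =>
    hP.comp_injective fun q q' h => by simpa using h

lemma tsum_sum_keyMarginal (hP : Summable P) : ∑' q, ∑ k, keyMarginal P k q = ∑' w, P w :=
  (tsum_eq_tsum_sum_sum_sum hP).symm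

variable (P) in
/-- Given `(K, F, Z) = (k, q)`, the new key `K'` is drawn from `π · k q / P_{KFZ}(k, q)`,
independently of `(Kx, Ky)`. Where `P_{KFZ}(k, q) = 0` the division gives `0`, but so does `P`. -/
def glueCoupling (π : K → K → T × Z → ℝ) (p : K × K × K × K × T × Z) : ℝ :=
  P p.2 * (π p.1 p.2.1 p.2.2.2.2 / keyMarginal P p.2.1 p.2.2.2.2)

variable {π : K → K → T × Z → ℝ}

lemma glueCoupling_nonneg (hπ0 : ∀ k' k q, 0 ≤ π k' k q) (hP : ∀ w, 0 ≤ P w)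
    (p : K × K × K × K × T × Z) :
    0 ≤ glueCoupling P π p :=
  mul_nonneg (hP _) (div_nonneg (hπ0 _ _ _) (keyMarginal_nonneg hP _ _))

lemma le_keyMarginal_of_sum_eq (hπ0 : ∀ k' k q, 0 ≤ π k' k q)
    (hπ : ∀ k q, ∑ k', π k' k q = keyMarginal P k q)
    (k' k : K) (q : T × Z) : π k' k q ≤ keyMarginal P k q :=
  hπ k q ▸ Finset.single_le_sum (f := (π · k q)) (fun _ _ => hπ0 _ _ _) (Finset.mem_univ k')

lemma glueCoupling_le (hπ0 : ∀ k' k q, 0 ≤ π k' k q)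
    (hπ : ∀ k q, ∑ k', π k' k q = keyMarginal P k q)
    (hP : ∀ w, 0 ≤ P w) (p : K × K × K × K × T × Z) :
    glueCoupling P π p ≤ P p.2 :=
  mul_le_of_le_one_right (hP _) (div_le_one_of_le₀ (le_keyMarginal_of_sum_eq hπ0 hπ _ _ _)
    (keyMarginal_nonneg hP _ _))

lemma sum_glueCoupling_fst (hπ : ∀ k q, ∑ k', π k' k q = keyMarginal P k q)
    (hP : ∀ w, 0 ≤ P w) (w : K × K × K × T × Z) :
    ∑ k', glueCoupling P π (k', w) = P w := by
  by_cases ha : keyMarginal P w.1 w.2.2.2 = 0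
  · have hw : P w = 0 := le_antisymm (ha ▸ le_keyMarginal hP w) (hP w)
    simp [glueCoupling, hw]
  · simp only [glueCoupling, ← Finset.mul_sum, ← Finset.sum_div, hπ, div_self ha, mul_one]

lemma sum_sum_glueCoupling (hπ0 : ∀ k' k q, 0 ≤ π k' k q)
    (hπ : ∀ k q, ∑ k', π k' k q = keyMarginal P k q)
    (k' k : K) (q : T × Z) :
    ∑ kx, ∑ ky, glueCoupling P π (k', k, kx, ky, q) = π k' k q := by
  simp only [glueCoupling, ← Finset.sum_mul]
  change keyMarginal P k q * _ = _
  by_cases ha : keyMarginal P k q = 0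
  · simp [ha, le_antisymm (ha ▸ le_keyMarginal_of_sum_eq hπ0 hπ k' k q) (hπ0 k' k q)]
  · exact mul_div_cancel₀ _ ha

lemma isPMF_glueCoupling (hπ0 : ∀ k' k q, 0 ≤ π k' k q)
    (hπ : ∀ k q, ∑ k', π k' k q = keyMarginal P k q)
    (hP : IsPMF P) : IsPMF (glueCoupling P π) := by
  refine ⟨glueCoupling_nonneg hπ0 hP.1, ?_⟩
  have hS : Summable (glueCoupling P π) :=
    summable_prod_of_nonneg_of_fintype (glueCoupling_nonneg hπ0 hP.1) fun k' =>
      hP.summable.of_nonneg_of_le (fun w => glueCoupling_nonneg hπ0 hP.1 (k', w))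
        (fun w => glueCoupling_le hπ0 hπ hP.1 (k', w))
  rw [tsum_prod_eq_tsum_sum hS, ← hP.2]
  exact tsum_congr (sum_glueCoupling_fst hπ hP.1)

lemma tsum_glueCoupling_diag (hπ0 : ∀ k' k q, 0 ≤ π k' k q)
    (hπ : ∀ k q, ∑ k', π k' k q = keyMarginal P k q)
    (hP : IsPMF P) :
    ∑' w, glueCoupling P π (w.1, w) = ∑' q, ∑ k, π k k q := by
  have hS : Summable fun w => glueCoupling P π (w.1, w) :=
    hP.summable.of_nonneg_of_le (fun w => glueCoupling_nonneg hπ0 hP.1 _)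
      (fun w => glueCoupling_le hπ0 hπ hP.1 _)
  rw [tsum_eq_tsum_sum_sum_sum hS]
  exact tsum_congr fun q => Finset.sum_congr rfl fun k _ => sum_sum_glueCoupling hπ0 hπ k k q

end Gluing

section KeyCoupling

variable {K T Z : Type*} [Fintype K] {P : K × K × K × T × Z → ℝ}

variable (P) in
def uniformKeyMarginal (q : T × Z) : ℝ := (Fintype.card K : ℝ)⁻¹ * ∑ k, keyMarginal P k q

lemma sum_uniformKeyMarginal (q : T × Z) :
    ∑ _k : K, uniformKeyMarginal P q = ∑ k, keyMarginal P k q :=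
  sum_inv_card_mul_sum _

lemma summable_uniformKeyMarginal (hP : Summable P) : Summable (uniformKeyMarginal P) :=
  (summable_sum fun k _ => summable_keyMarginal hP k).mul_left _

lemma tvDist_eq_tsum_half_sum_abs (hP : Summable P) :
    tvDist
        (fun q : K × T × Z => ∑' (kx : K) (ky : K), P (q.1, kx, ky, q.2.1, q.2.2))
        (fun q : K × T × Z => (Fintype.card K : ℝ)⁻¹ *
          ∑' (k : K) (kx : K) (ky : K), P (k, kx, ky, q.2.1, q.2.2))
      = ∑' q, 2⁻¹ * ∑ k, |keyMarginal P k q - uniformKeyMarginal P q| := by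
  have hslice (k : K) : Summable fun q => |keyMarginal P k q - uniformKeyMarginal P q| :=
    ((summable_keyMarginal hP k).sub (summable_uniformKeyMarginal hP)).abs
  simp only [tvDist, tsum_fintype]
  rw [tsum_mul_left, one_div]
  congr 1
  exact tsum_prod_eq_tsum_sum
    (f := fun x : K × T × Z => |keyMarginal P x.1 x.2 - uniformKeyMarginal P x.2|)
    (summable_prod_of_nonneg_of_fintype (fun _ => abs_nonneg _) hslice)

variable [DecidableEq K]

variable (P) in
/-- For each `q`, a maximal coupling of the uniform key (first index) with `P_{KFZ}(·, q)`. -/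
def keyCoupling (k' k : K) (q : T × Z) : ℝ :=
  maximalCoupling (keyMarginal P · q) (fun _ => uniformKeyMarginal P q) k k'

lemma keyCoupling_nonneg (hP : ∀ w, 0 ≤ P w) (k' k : K) (q : T × Z) :
    0 ≤ keyCoupling P k' k q :=
  maximalCoupling_nonneg (keyMarginal_nonneg hP · q) (fun _ => mul_nonneg (by positivity)
    (Finset.sum_nonneg fun k _ => keyMarginal_nonneg hP k q)) k k'

lemma sum_keyCoupling_fst (k : K) (q : T × Z) :
    ∑ k', keyCoupling P k' k q = keyMarginal P k q :=
  sum_maximalCoupling_right (sum_uniformKeyMarginal q).symm k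

lemma sum_keyCoupling_snd (k' : K) (q : T × Z) :
    ∑ k, keyCoupling P k' k q = uniformKeyMarginal P q :=
  sum_maximalCoupling_left (sum_uniformKeyMarginal q).symm k'

lemma one_sub_tsum_half_sum_abs_le_probOf_fst_eq (hP : IsPMF P) :
    1 - ∑' q, 2⁻¹ * ∑ k, |keyMarginal P k q - uniformKeyMarginal P q|
      ≤ probOf (glueCoupling P (keyCoupling P)) {p | p.1 = p.2.1} := by
  have hS := hP.summable
  have hπ0 := keyCoupling_nonneg hP.1
  have hπ : ∀ k q, ∑ k', keyCoupling P k' k q = keyMarginal P k q := sum_keyCoupling_fst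
  have hmin : ∀ q, ∑ k, min (keyMarginal P k q) (uniformKeyMarginal P q)
      = ∑ k, keyMarginal P k q - 2⁻¹ * ∑ k, |keyMarginal P k q - uniformKeyMarginal P q| :=
    fun q => sum_min_eq_sub_half_sum_abs_sub (sum_uniformKeyMarginal q).symm
  rw [probOf_fst_eq_fst_snd (isPMF_glueCoupling hπ0 hπ hP).summable,
    tsum_glueCoupling_diag hπ0 hπ hP, ← hP.2, ← tsum_sum_keyMarginal hS]
  have hsum : Summable fun q => ∑ k, keyMarginal P k q :=
    summable_sum fun k _ => summable_keyMarginal hS k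
  have habs : Summable fun q => 2⁻¹ * ∑ k, |keyMarginal P k q - uniformKeyMarginal P q| :=
    (summable_sum fun k _ =>
      ((summable_keyMarginal hS k).sub (summable_uniformKeyMarginal hS)).abs).mul_left _
  rw [← hsum.tsum_sub habs]
  refine Summable.tsum_le_tsum (fun q => ?_) (hsum.sub habs) ?_
  · rw [← hmin q]
    exact Finset.sum_le_sum fun k _ =>
      min_le_maximalCoupling_self (a := (keyMarginal P · q)) (b := fun _ => _) k
  · exact summable_sum fun k _ => (summable_keyMarginal hS k).of_nonneg_of_le (hπ0 k k)
      (le_keyMarginal_of_sum_eq hπ0 hπ k k)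

end KeyCoupling

theorem conversion_to_high_secrecy_general
    {K T Z : Type*} [Fintype K]
    (ε δ : ℝ)
    (P : K × K × K × T × Z → ℝ) (hP : IsPMF P)
    (hrel : 1 - ε ≤ probOf P {w | w.1 = w.2.1 ∧ w.2.1 = w.2.2.1})
    (hsec : tvDist
        (fun q : K × T × Z => ∑' (kx : K) (ky : K), P (q.1, kx, ky, q.2.1, q.2.2))
        (fun q : K × T × Z => (Fintype.card K : ℝ)⁻¹ *
          ∑' (k : K) (kx : K) (ky : K), P (k, kx, ky, q.2.1, q.2.2)) ≤ δ) :
    ∃ Q : K × K × K × K × T × Z → ℝ, IsPMF Q ∧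
      -- the marginal of Q on (K, Kx, Ky, F, Z) equals P
      (∀ w : K × K × K × T × Z,
        (∑' k' : K, Q (k', w.1, w.2.1, w.2.2.1, w.2.2.2.1, w.2.2.2.2)) = P w) ∧
      -- Q_{K'FZ} = P_unif × P_{FZ} exactly
      (∀ q : K × T × Z,
        (∑' (k : K) (kx : K) (ky : K), Q (q.1, k, kx, ky, q.2.1, q.2.2))
          = (Fintype.card K : ℝ)⁻¹ *
              ∑' (k : K) (kx : K) (ky : K), P (k, kx, ky, q.2.1, q.2.2)) ∧
      -- Pr_Q[K' = Kx = Ky] ≥ 1 - ε - δ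
      1 - ε - δ ≤ probOf Q {w | w.1 = w.2.2.1 ∧ w.2.2.1 = w.2.2.2.1} := by
  classical
  have hπ0 := keyCoupling_nonneg hP.1
  have hπ : ∀ k q, ∑ k', keyCoupling P k' k q = keyMarginal P k q := sum_keyCoupling_fst
  have hQ := isPMF_glueCoupling hπ0 hπ hP
  refine ⟨glueCoupling P (keyCoupling P), hQ, fun w => ?_, fun x => ?_, ?_⟩
  · simpa only [tsum_fintype] using sum_glueCoupling_fst hπ hP.1 w
  · simp only [tsum_fintype, sum_sum_glueCoupling hπ0 hπ]
    exact sum_keyCoupling_snd x.1 x.2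
  · rw [tvDist_eq_tsum_half_sum_abs hP.summable] at hsec
    have hkey := probOf_preimage_snd hQ.summable (sum_glueCoupling_fst hπ hP.1)
      {w : K × K × K × T × Z | w.1 = w.2.1 ∧ w.2.1 = w.2.2.1}
    have hdiag := one_sub_tsum_half_sum_abs_le_probOf_fst_eq hP
    have hunion := hQ.probOf_add_probOf_sub_one_le
      (A := Prod.snd ⁻¹' {w | w.1 = w.2.1 ∧ w.2.1 = w.2.2.1}) (B := {p | p.1 = p.2.1})
      (C := {w | w.1 = w.2.2.1 ∧ w.2.2.1 = w.2.2.2.1})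
      (by rintro p ⟨⟨h1, h2⟩, h3⟩; exact ⟨h3.trans h1, h2⟩)
    linarith

/-- conversion of an (ε,δ)-secret key into an (ε+δ,0)-secret key.
Coordinates of `P` are `(K, Kx, Ky, F, Z)`; coordinates of `Q` are `(K', K, Kx, Ky, F, Z)`. -/
theorem conversion_to_high_secrecy
    {K T Z : Type*} [Fintype K] [Countable T] [Countable Z]
    (ε δ : ℝ) (hε0 : 0 ≤ ε) (hε1 : ε < 1) (hδ0 : 0 ≤ δ) (hδ1 : δ < 1)
    (P : K × K × K × T × Z → ℝ) (hP : IsPMF P)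
    (hrel : 1 - ε ≤ probOf P {w | w.1 = w.2.1 ∧ w.2.1 = w.2.2.1})
    (hsec : tvDist
        (fun q : K × T × Z => ∑' (kx : K) (ky : K), P (q.1, kx, ky, q.2.1, q.2.2))
        (fun q : K × T × Z => (Fintype.card K : ℝ)⁻¹ *
          ∑' (k : K) (kx : K) (ky : K), P (k, kx, ky, q.2.1, q.2.2)) ≤ δ) :
    ∃ Q : K × K × K × K × T × Z → ℝ, IsPMF Q ∧
      -- the marginal of Q on (K, Kx, Ky, F, Z) equals P
      (∀ w : K × K × K × T × Z,
        (∑' k' : K, Q (k', w.1, w.2.1, w.2.2.1, w.2.2.2.1, w.2.2.2.2)) = P w) ∧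
      -- Q_{K'FZ} = P_unif × P_{FZ} exactly
      (∀ q : K × T × Z,
        (∑' (k : K) (kx : K) (ky : K), Q (q.1, k, kx, ky, q.2.1, q.2.2))
          = (Fintype.card K : ℝ)⁻¹ *
              ∑' (k : K) (kx : K) (ky : K), P (k, kx, ky, q.2.1, q.2.2)) ∧
      -- Pr_Q[K' = Kx = Ky] ≥ 1 - ε - δ
      1 - ε - δ ≤ probOf Q {w | w.1 = w.2.2.1 ∧ w.2.2.1 = w.2.2.2.1} :=
  conversion_to_high_secrecy_general ε δ P hP hrel hsec
end
end

section
/- Direct part of the equivalence between the two secret key definitions: Let 𝒦 be a finite set and 𝒯, 𝒵 countable sets, ε, δ ∈ [0,1). Let P be a pmf on 𝒦×𝒦×𝒦×𝒯×𝒵 with coordinates (K, Kx, Ky, F, Z) such that Pr_P[K = Kx = Ky] ≥ 1 − ε and d(P_{KFZ}, P_unif × P_{FZ}) ≤ δ. Then d(P_{KxKyFZ}, P_unif^{(2)} × P_{FZ}) ≤ ε + δ, where P_unif^{(2)}(k₁,k₂) = 1{k₁ = k₂}/|𝒦|. -/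
open scoped BigOperators

noncomputable section

attribute [local instance] Classical.propDecidable

lemma red {α β : Type*} [Fintype α] {f : α × β → ℝ}
    (h0 : ∀ p, 0 ≤ f p) (h : ∀ a, Summable fun b => f (a, b)) :
    Summable f ∧ ∑' p, f p = ∑ a, ∑' b, f (a, b) := by
  have hs : Summable f := (summable_prod_of_nonneg h0).2 ⟨h, Summable.of_finite⟩
  exact ⟨hs, by rw [Summable.tsum_prod' hs h, tsum_fintype]⟩

lemma key {K U : Type*} [Fintype K] (ε δ c : ℝ)
    (p : K → K → K → U → ℝ)
    (hp0 : ∀ k a b u, 0 ≤ p k a b u)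
    (hps : ∀ k a b, Summable (p k a b))
    (hc : 0 ≤ c)
    (htot : ∑ k, ∑ a, ∑ b, ∑' u, p k a b u = 1)
    (hdiag : 1 - ε ≤ ∑ k, ∑' u, p k k k u)
    (hsec : ∑ k, ∑' u, |(∑ a, ∑ b, p k a b u) - c * ∑ k', ∑ a, ∑ b, p k' a b u| ≤ 2 * δ) :
    ∑ x, ∑ y, ∑' u, |(∑ k, p k x y u) -
        (if x = y then c else 0) * ∑ k', ∑ a, ∑ b, p k' a b u| ≤ 2 * ε + 2 * δ := by
  classical
  set A : K → K → U → ℝ := fun x y u => ∑ k, p k x y u with hAdef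
  set M : K → U → ℝ := fun k u => ∑ a, ∑ b, p k a b u with hMdef
  set S : U → ℝ := fun u => ∑ k', M k' u with hSdef
  set G : K → K → U → ℝ := fun x y u => if x = y then p x x x u else 0 with hGdef
  set B : K → K → U → ℝ := fun x y u => if x = y then M x u else 0 with hBdef
  set Q : K → K → U → ℝ := fun x y u => (if x = y then c else 0) * S u with hQdef
  -- summability facts
  have hSummA : ∀ x y, Summable (A x y) := fun x y =>
    summable_sum fun k _ => hps k x y
  have hSummM : ∀ k, Summable (M k) := fun k =>
    summable_sum fun a _ => summable_sum fun b _ => hps k a b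
  have hSummS : Summable S := summable_sum fun k _ => hSummM k
  have hM0 : ∀ k u, 0 ≤ M k u := fun k u =>
    Finset.sum_nonneg fun a _ => Finset.sum_nonneg fun b _ => hp0 k a b u
  have hS0 : ∀ u, 0 ≤ S u := fun u => Finset.sum_nonneg fun k _ => hM0 k u
  have hA0 : ∀ x y u, 0 ≤ A x y u := fun x y u => Finset.sum_nonneg fun k _ => hp0 k x y u
  have hG0 : ∀ x y u, 0 ≤ G x y u := by
    intro x y u; simp only [hGdef]; split <;> [exact hp0 x x x u; exact le_rfl]
  have hB0 : ∀ x y u, 0 ≤ B x y u := by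
    intro x y u; simp only [hBdef]; split <;> [exact hM0 x u; exact le_rfl]
  have hQ0 : ∀ x y u, 0 ≤ Q x y u := by
    intro x y u; simp only [hQdef]
    exact mul_nonneg (by split <;> [exact hc; exact le_rfl]) (hS0 u)
  have hSummG : ∀ x y, Summable (G x y) := by
    intro x y
    refine Summable.of_nonneg_of_le (hG0 x y) (fun u => ?_) (hps x x x)
    simp only [hGdef]; split <;> [exact le_rfl; exact hp0 x x x u]
  have hSummB : ∀ x y, Summable (B x y) := by
    intro x y
    refine Summable.of_nonneg_of_le (hB0 x y) (fun u => ?_) (hSummM x)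
    simp only [hBdef]; split <;> [exact le_rfl; exact hM0 x u]
  have hSummQ : ∀ x y, Summable (Q x y) := fun x y => (hSummS).mul_left _
  have hSummAQ : ∀ x y, Summable fun u => |A x y u - Q x y u| := by
    intro x y
    refine Summable.of_nonneg_of_le (fun u => abs_nonneg _) (fun u => ?_)
      ((hSummA x y).add (hSummQ x y))
    exact (abs_sub _ _).trans (by rw [abs_of_nonneg (hA0 x y u), abs_of_nonneg (hQ0 x y u)])
  have hSummBQ : ∀ x y, Summable fun u => |B x y u - Q x y u| := by
    intro x y
    refine Summable.of_nonneg_of_le (fun u => abs_nonneg _) (fun u => ?_)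
      ((hSummB x y).add (hSummQ x y))
    exact (abs_sub _ _).trans (by rw [abs_of_nonneg (hB0 x y u), abs_of_nonneg (hQ0 x y u)])
  -- pointwise inequalities
  have hGA : ∀ x y u, G x y u ≤ A x y u := by
    intro x y u
    simp only [hGdef]
    split
    · next h =>
      subst h
      exact Finset.single_le_sum (f := fun k => p k x x u) (fun i _ => hp0 i x x u)
        (Finset.mem_univ x)
    · exact hA0 x y u
  have hGB : ∀ x y u, G x y u ≤ B x y u := by
    intro x y u
    simp only [hGdef, hBdef]
    split
    · next h =>
      calc p x x x u ≤ ∑ b, p x x b u :=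
            Finset.single_le_sum (f := fun b => p x x b u) (fun i _ => hp0 x x i u)
              (Finset.mem_univ x)
        _ ≤ ∑ a, ∑ b, p x a b u :=
            Finset.single_le_sum (f := fun a => ∑ b, p x a b u)
              (fun i _ => Finset.sum_nonneg fun j _ => hp0 x i j u) (Finset.mem_univ x)
    · exact le_rfl
  have key1 : ∀ x y u, |A x y u - Q x y u| ≤
      ((A x y u - G x y u) + (B x y u - G x y u)) + |B x y u - Q x y u| := by
    intro x y u
    have h1 : |A x y u - B x y u| ≤ (A x y u - G x y u) + (B x y u - G x y u) := by
      have e : A x y u - B x y u = (A x y u - G x y u) - (B x y u - G x y u) := by ring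
      rw [e]
      refine (abs_sub _ _).trans ?_
      rw [abs_of_nonneg (by linarith [hGA x y u]), abs_of_nonneg (by linarith [hGB x y u])]
    have h2 := abs_sub_le (A x y u) (B x y u) (Q x y u)
    linarith
  -- per (x,y) tsum bound
  have step : ∀ x y, ∑' u, |A x y u - Q x y u| ≤
      (((∑' u, A x y u) - ∑' u, G x y u) + ((∑' u, B x y u) - ∑' u, G x y u)) +
        ∑' u, |B x y u - Q x y u| := by
    intro x y
    have hR : Summable fun u =>
        ((A x y u - G x y u) + (B x y u - G x y u)) + |B x y u - Q x y u| :=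
      (((hSummA x y).sub (hSummG x y)).add ((hSummB x y).sub (hSummG x y))).add (hSummBQ x y)
    calc ∑' u, |A x y u - Q x y u|
        ≤ ∑' u, (((A x y u - G x y u) + (B x y u - G x y u)) + |B x y u - Q x y u|) :=
          Summable.tsum_le_tsum (key1 x y) (hSummAQ x y) hR
      _ = (((∑' u, A x y u) - ∑' u, G x y u) + ((∑' u, B x y u) - ∑' u, G x y u)) +
            ∑' u, |B x y u - Q x y u| := by
          rw [Summable.tsum_add (((hSummA x y).sub (hSummG x y)).add ((hSummB x y).sub (hSummG x y)))
              (hSummBQ x y),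
            Summable.tsum_add ((hSummA x y).sub (hSummG x y)) ((hSummB x y).sub (hSummG x y)),
            Summable.tsum_sub (hSummA x y) (hSummG x y), Summable.tsum_sub (hSummB x y) (hSummG x y)]
  -- totals
  have hA1 : ∑ x, ∑ y, ∑' u, A x y u = 1 := by
    have e : ∀ x y, ∑' u, A x y u = ∑ k, ∑' u, p k x y u := fun x y =>
      Summable.tsum_finsetSum fun k _ => hps k x y
    calc ∑ x, ∑ y, ∑' u, A x y u = ∑ x, ∑ y, ∑ k, ∑' u, p k x y u := by
          simp only [e]
      _ = ∑ x, ∑ k, ∑ y, ∑' u, p k x y u :=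
          Finset.sum_congr rfl fun x _ => Finset.sum_comm
      _ = ∑ k, ∑ x, ∑ y, ∑' u, p k x y u := Finset.sum_comm
      _ = 1 := htot
  have eM : ∀ k, ∑' u, M k u = ∑ a, ∑ b, ∑' u, p k a b u := by
    intro k
    rw [Summable.tsum_finsetSum fun a _ => summable_sum fun b _ => hps k a b]
    exact Finset.sum_congr rfl fun a _ => Summable.tsum_finsetSum fun b _ => hps k a b
  have hB1 : ∑ x, ∑ y, ∑' u, B x y u = 1 := by
    have e : ∀ x y, ∑' u, B x y u = if x = y then ∑' u, M x u else 0 := by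
      intro x y
      by_cases h : x = y <;> simp [hBdef, h]
    calc ∑ x, ∑ y, ∑' u, B x y u = ∑ x, ∑ y, (if x = y then ∑' u, M x u else 0) := by
          simp only [e]
      _ = ∑ x, ∑' u, M x u := by
          refine Finset.sum_congr rfl fun x _ => ?_
          simp [Finset.sum_ite_eq]
      _ = 1 := by rw [← htot]; exact Finset.sum_congr rfl fun k _ => eM k
  have hG1 : 1 - ε ≤ ∑ x, ∑ y, ∑' u, G x y u := by
    have e : ∀ x y, ∑' u, G x y u = if x = y then ∑' u, p x x x u else 0 := by
      intro x y
      by_cases h : x = y <;> simp [hGdef, h]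
    calc 1 - ε ≤ ∑ k, ∑' u, p k k k u := hdiag
      _ = ∑ x, ∑ y, ∑' u, G x y u := by
          simp only [e]
          refine Finset.sum_congr rfl fun x _ => ?_
          simp [Finset.sum_ite_eq]
  have hBQ1 : ∑ x, ∑ y, ∑' u, |B x y u - Q x y u| ≤ 2 * δ := by
    have e : ∀ x y, ∑' u, |B x y u - Q x y u| =
        if x = y then ∑' u, |M x u - c * S u| else 0 := by
      intro x y
      by_cases h : x = y <;> simp [hBdef, hQdef, h]
    calc ∑ x, ∑ y, ∑' u, |B x y u - Q x y u|
        = ∑ x, ∑' u, |M x u - c * S u| := by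
          simp only [e]
          refine Finset.sum_congr rfl fun x _ => ?_
          simp [Finset.sum_ite_eq]
      _ ≤ 2 * δ := hsec
  -- assemble
  have main : ∑ x, ∑ y, ∑' u, |A x y u - Q x y u| ≤
      (((∑ x, ∑ y, ∑' u, A x y u) - ∑ x, ∑ y, ∑' u, G x y u) +
        ((∑ x, ∑ y, ∑' u, B x y u) - ∑ x, ∑ y, ∑' u, G x y u)) +
        ∑ x, ∑ y, ∑' u, |B x y u - Q x y u| := by
    have h1 : ∑ x, ∑ y, ∑' u, |A x y u - Q x y u| ≤
        ∑ x, ∑ y, ((((∑' u, A x y u) - ∑' u, G x y u) +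
          ((∑' u, B x y u) - ∑' u, G x y u)) + ∑' u, |B x y u - Q x y u|) :=
      Finset.sum_le_sum fun x _ => Finset.sum_le_sum fun y _ => step x y
    refine h1.trans (le_of_eq ?_)
    simp [Finset.sum_add_distrib, Finset.sum_sub_distrib]
  have := hG1
  calc ∑ x, ∑ y, ∑' u, |A x y u - Q x y u| ≤ _ := main
    _ ≤ 2 * ε + 2 * δ := by
        rw [hA1, hB1]
        linarith [hBQ1, hG1]


set_option maxHeartbeats 1000000 in

/-- direct part of the equivalence between the two secret key
definitions. Coordinates of `P` are `(K, Kx, Ky, F, Z)`. -/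
theorem direct_part_equivalence
    {K T Z : Type*} [Fintype K] [Countable T] [Countable Z]
    (ε δ : ℝ) (hε0 : 0 ≤ ε) (hε1 : ε < 1) (hδ0 : 0 ≤ δ) (hδ1 : δ < 1)
    (P : K × K × K × T × Z → ℝ) (hP : IsPMF P)
    (hrel : 1 - ε ≤ probOf P {w | w.1 = w.2.1 ∧ w.2.1 = w.2.2.1})
    (hsec : tvDist
        (fun q : K × T × Z => ∑' (kx : K) (ky : K), P (q.1, kx, ky, q.2.1, q.2.2))
        (fun q : K × T × Z => (Fintype.card K : ℝ)⁻¹ *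
          ∑' (k : K) (kx : K) (ky : K), P (k, kx, ky, q.2.1, q.2.2)) ≤ δ) :
    tvDist
      (fun v : K × K × T × Z => ∑' k : K, P (k, v.1, v.2.1, v.2.2.1, v.2.2.2))
      (fun v : K × K × T × Z =>
        (if v.1 = v.2.1 then (Fintype.card K : ℝ)⁻¹ else 0) *
          ∑' (k : K) (kx : K) (ky : K), P (k, kx, ky, v.2.2.1, v.2.2.2))
      ≤ ε + δ := by
  classical
  obtain ⟨hP0, hP1⟩ := hP
  have hPs : Summable P := by
    by_contra h
    rw [tsum_eq_zero_of_not_summable h] at hP1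
    norm_num at hP1
  set c : ℝ := (Fintype.card K : ℝ)⁻¹ with hcdef
  have hc : 0 ≤ c := inv_nonneg.2 (Nat.cast_nonneg _)
  -- basic summability of slices
  have hps : ∀ k a b : K, Summable fun u : T × Z => P (k, a, b, u) := by
    intro k a b
    have hinj : Function.Injective (fun u : T × Z => ((k, a, b, u) : K × K × K × T × Z)) := by
      intro u v h
      simpa using h
    exact hPs.comp_injective hinj
  have hp0 : ∀ (k a b : K) (u : T × Z), 0 ≤ P (k, a, b, u) := fun k a b u => hP0 _
  have hSummM : ∀ k : K, Summable fun u : T × Z => ∑ a : K, ∑ b : K, P (k, a, b, u) :=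
    fun k => summable_sum fun a _ => summable_sum fun b _ => hps k a b
  have hSummS : Summable fun u : T × Z => ∑ k : K, ∑ a : K, ∑ b : K, P (k, a, b, u) :=
    summable_sum fun k _ => hSummM k
  -- htot
  have r3 : ∀ k a : K, Summable fun w : K × T × Z => P (k, a, w) := by
    intro k a
    exact (red (f := fun w : K × T × Z => P (k, a, w)) (fun w => hP0 _) (fun b => hps k a b)).1
  have r2 : ∀ k : K, Summable fun w : K × K × T × Z => P (k, w) := by
    intro k
    exact (red (f := fun w : K × K × T × Z => P (k, w)) (fun w => hP0 _) (fun a => r3 k a)).1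
  have htot : ∑ k : K, ∑ a : K, ∑ b : K, ∑' u : T × Z, P (k, a, b, u) = 1 := by
    rw [← hP1, (red (f := P) (fun w => hP0 _) r2).2]
    refine Finset.sum_congr rfl fun k _ => ?_
    rw [(red (f := fun w : K × K × T × Z => P (k, w)) (fun w => hP0 _) (fun a => r3 k a)).2]
    refine Finset.sum_congr rfl fun a _ => ?_
    rw [(red (f := fun w : K × T × Z => P (k, a, w)) (fun w => hP0 _) (fun b => hps k a b)).2]
  -- hdiag
  have hdiag : 1 - ε ≤ ∑ k : K, ∑' u : T × Z, P (k, k, k, u) := by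
    rw [probOf] at hrel
    set E : Set (K × K × K × T × Z) := {w | w.1 = w.2.1 ∧ w.2.1 = w.2.2.1} with hEdef
    rw [tsum_subtype E P] at hrel
    have h0i : ∀ w, 0 ≤ E.indicator P w := fun w =>
      Set.indicator_nonneg (fun a _ => hP0 a) w
    have hlei : ∀ w, E.indicator P w ≤ P w := fun w =>
      Set.indicator_le_self' (fun a _ => hP0 a) w
    have hips : ∀ k a b : K, Summable fun u : T × Z => E.indicator P (k, a, b, u) :=
      fun k a b => Summable.of_nonneg_of_le (fun u => h0i _) (fun u => hlei _) (hps k a b)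
    have ir3 : ∀ k a : K, Summable fun w : K × T × Z => E.indicator P (k, a, w) :=
      fun k a => (red (f := fun w : K × T × Z => E.indicator P (k, a, w)) (fun w => h0i _) (fun b => hips k a b)).1
    have ir2 : ∀ k : K, Summable fun w : K × K × T × Z => E.indicator P (k, w) :=
      fun k => (red (f := fun w : K × K × T × Z => E.indicator P (k, w)) (fun w => h0i _) (fun a => ir3 k a)).1
    have e1 : ∑' w, E.indicator P w =
        ∑ k : K, ∑ a : K, ∑ b : K, ∑' u : T × Z, E.indicator P (k, a, b, u) := by
      rw [(red (f := E.indicator P) (fun w => h0i _) ir2).2]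
      refine Finset.sum_congr rfl fun k _ => ?_
      rw [(red (f := fun w : K × K × T × Z => E.indicator P (k, w)) (fun w => h0i _) (fun a => ir3 k a)).2]
      refine Finset.sum_congr rfl fun a _ => ?_
      rw [(red (f := fun w : K × T × Z => E.indicator P (k, a, w)) (fun w => h0i _) (fun b => hips k a b)).2]
    have e2 : ∀ k a b : K, (∑' u : T × Z, E.indicator P (k, a, b, u)) =
        if k = a ∧ a = b then ∑' u : T × Z, P (k, a, b, u) else 0 := by
      intro k a b
      by_cases h : k = a ∧ a = b
      · rw [if_pos h]
        refine tsum_congr fun u => ?_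
        rw [Set.indicator_of_mem]
        exact ⟨h.1, h.2⟩
      · rw [if_neg h]
        have : ∀ u : T × Z, E.indicator P (k, a, b, u) = 0 := by
          intro u
          rw [Set.indicator_of_notMem]
          intro hmem
          exact h ⟨hmem.1, hmem.2⟩
        simp [this]
    have e3 : ∀ k : K, (∑ a : K, ∑ b : K,
        if k = a ∧ a = b then ∑' u : T × Z, P (k, a, b, u) else 0) =
        ∑' u : T × Z, P (k, k, k, u) := by
      intro k
      simp [ite_and, Finset.sum_ite_eq]
    calc 1 - ε ≤ ∑' w, E.indicator P w := hrel
      _ = ∑ k : K, ∑ a : K, ∑ b : K, ∑' u : T × Z, E.indicator P (k, a, b, u) := e1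
      _ = ∑ k : K, ∑' u : T × Z, P (k, k, k, u) := by
          refine Finset.sum_congr rfl fun k _ => ?_
          rw [show (∑ a : K, ∑ b : K, ∑' u : T × Z, E.indicator P (k, a, b, u)) =
              ∑ a : K, ∑ b : K, (if k = a ∧ a = b then ∑' u : T × Z, P (k, a, b, u) else 0) from
            Finset.sum_congr rfl fun a _ => Finset.sum_congr rfl fun b _ => e2 k a b]
          exact e3 k
  -- hsec'
  have hsecsum : ∀ k : K, Summable fun u : T × Z =>
      |(∑ a : K, ∑ b : K, P (k, a, b, u)) -
        c * ∑ k' : K, ∑ a : K, ∑ b : K, P (k', a, b, u)| :=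
    fun k => ((hSummM k).sub (hSummS.mul_left c)).abs
  have hsec' : ∑ k : K, ∑' u : T × Z,
      |(∑ a : K, ∑ b : K, P (k, a, b, u)) -
        c * ∑ k' : K, ∑ a : K, ∑ b : K, P (k', a, b, u)| ≤ 2 * δ := by
    simp only [tvDist, tsum_fintype] at hsec
    have e : (∑' q : K × T × Z, |(∑ kx : K, ∑ ky : K, P (q.1, kx, ky, q.2.1, q.2.2)) -
        c * ∑ k : K, ∑ kx : K, ∑ ky : K, P (k, kx, ky, q.2.1, q.2.2)|) =
        ∑ k : K, ∑' u : T × Z,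
          |(∑ a : K, ∑ b : K, P (k, a, b, u)) -
            c * ∑ k' : K, ∑ a : K, ∑ b : K, P (k', a, b, u)| :=
      (red (f := fun q : K × T × Z => |(∑ a : K, ∑ b : K, P (q.1, a, b, q.2)) - c * ∑ k' : K, ∑ a : K, ∑ b : K, P (k', a, b, q.2)|) (fun q => abs_nonneg _) (fun k => hsecsum k)).2
    rw [e] at hsec
    linarith
  -- final reduction of the goal
  have hg2 : ∀ x y : K, Summable fun u : T × Z =>
      |(∑ k : K, P (k, x, y, u)) -
        (if x = y then c else 0) * ∑ k : K, ∑ kx : K, ∑ ky : K, P (k, kx, ky, u)| :=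
    fun x y => ((summable_sum fun k _ => hps k x y).sub (hSummS.mul_left _)).abs
  have hg1 : ∀ x : K, Summable fun w : K × T × Z =>
      |(∑ k : K, P (k, x, w.1, w.2.1, w.2.2)) -
        (if x = w.1 then c else 0) * ∑ k : K, ∑ kx : K, ∑ ky : K, P (k, kx, ky, w.2.1, w.2.2)| :=
    fun x => (red (f := fun w : K × T × Z => |(∑ k : K, P (k, x, w.1, w.2)) - (if x = w.1 then c else 0) * ∑ k : K, ∑ kx : K, ∑ ky : K, P (k, kx, ky, w.2)|) (fun w => abs_nonneg _) (fun y => hg2 x y)).1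
  have hred : (∑' v : K × K × T × Z,
      |(∑ k : K, P (k, v.1, v.2.1, v.2.2.1, v.2.2.2)) -
        (if v.1 = v.2.1 then c else 0) *
          ∑ k : K, ∑ kx : K, ∑ ky : K, P (k, kx, ky, v.2.2.1, v.2.2.2)|) =
      ∑ x : K, ∑ y : K, ∑' u : T × Z,
        |(∑ k : K, P (k, x, y, u)) -
          (if x = y then c else 0) * ∑ k : K, ∑ kx : K, ∑ ky : K, P (k, kx, ky, u)| := by
    rw [(red (f := fun v : K × K × T × Z => |(∑ k : K, P (k, v.1, v.2.1, v.2.2)) - (if v.1 = v.2.1 then c else 0) * ∑ k : K, ∑ kx : K, ∑ ky : K, P (k, kx, ky, v.2.2)|) (fun v => abs_nonneg _) hg1).2]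
    refine Finset.sum_congr rfl fun x _ => ?_
    rw [(red (f := fun w : K × T × Z => |(∑ k : K, P (k, x, w.1, w.2)) - (if x = w.1 then c else 0) * ∑ k : K, ∑ kx : K, ∑ ky : K, P (k, kx, ky, w.2)|) (fun w => abs_nonneg _) (fun y => hg2 x y)).2]
  have hkey : ∑ x : K, ∑ y : K, ∑' u : T × Z,
      |(∑ k : K, P (k, x, y, u)) -
        (if x = y then c else 0) * ∑ k : K, ∑ kx : K, ∑ ky : K, P (k, kx, ky, u)| ≤
      2 * ε + 2 * δ :=
    key ε δ c (fun k a b u => P (k, a, b, u)) hp0 hps hc htot hdiag hsec'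
  simp only [tvDist, tsum_fintype]
  rw [hred]
  linarith
end
end

section
/- Single-shot Slepian–Wolf coding with a mismatched decoder: Let 𝒳, 𝒴 be countable sets and let P_{XY} and Q_{XY} be pmfs on 𝒳×𝒴. Then for every γ > 0 and every positive integer M, there exist an encoder e : 𝒳 → {1,…,M} and a decoder d : {1,…,M}×𝒴 → 𝒳 such that P_{XY}( { (x,y) : x ≠ d(e(x), y) } ) ≤ P_{XY}( { (x,y) : −log Q_{X|Y}(x|y) ≥ log M − γ } ) + 2^{−γ}, where Q_{X|Y}(x|y) = Q_{XY}(x,y)/Q_Y(y) if Q_Y(y) > 0 and Q_{X|Y}(x|y) = 0 otherwise (so that −log Q_{X|Y}(x|y) = ∞ is included in the set). -/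
open scoped BigOperators

noncomputable section

attribute [local instance] Classical.propDecidable

def pmargY {X Y : Type*} (P : X × Y → ℝ) : Y → ℝ := fun y => ∑' x : X, P (x, y)

/-- `Q_{X|Y}(x|y)`, set to `0` when `Q_Y(y) = 0`. -/
def pcond {X Y : Type*} (Q : X × Y → ℝ) (p : X × Y) : ℝ :=
  if 0 < pmargY Q p.2 then Q p / pmargY Q p.2 else 0

namespace SWaux


variable {α : Type*}

lemma summable_of_isPMF {P : α → ℝ} (h : IsPMF P) : Summable P := by
  by_contra hs
  have h0 := tsum_eq_zero_of_not_summable hs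
  rw [h.2] at h0
  norm_num at h0

lemma probOf_eq (P : α → ℝ) (S : Set α) : probOf P S = ∑' a, S.indicator P a :=
  tsum_subtype S P

lemma probOf_nonneg {P : α → ℝ} (h0 : ∀ a, 0 ≤ P a) (S : Set α) : 0 ≤ probOf P S :=
  tsum_nonneg fun a => h0 a

lemma probOf_mono {P : α → ℝ} (h : IsPMF P) {S T : Set α} (hST : S ⊆ T) :
    probOf P S ≤ probOf P T := by
  rw [probOf_eq, probOf_eq]
  exact Summable.tsum_le_tsum
    (fun a => Set.indicator_le_indicator_of_subset hST (fun a => h.1 a) a)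
    ((summable_of_isPMF h).indicator S) ((summable_of_isPMF h).indicator T)

lemma probOf_le_one {P : α → ℝ} (h : IsPMF P) (S : Set α) : probOf P S ≤ 1 := by
  have := probOf_mono h (Set.subset_univ S)
  rw [probOf_eq P Set.univ] at this
  simpa [Set.indicator_univ, h.2] using this

lemma probOf_union_le {P : α → ℝ} (h : IsPMF P) (S T : Set α) :
    probOf P (S ∪ T) ≤ probOf P S + probOf P T := by
  rw [probOf_eq, probOf_eq, probOf_eq, ← Summable.tsum_add ((summable_of_isPMF h).indicator S)
    ((summable_of_isPMF h).indicator T)]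
  refine Summable.tsum_le_tsum (fun a => ?_)
    ((summable_of_isPMF h).indicator _)
    (((summable_of_isPMF h).indicator S).add ((summable_of_isPMF h).indicator T))
  by_cases hS : a ∈ S <;> by_cases hT : a ∈ T <;>
    simp [Set.indicator, hS, hT, h.1 a, add_nonneg (h.1 a) (h.1 a)]

/-- extension of an encoder defined on a finset -/
def extf {X : Type*} {M : ℕ} (S : Finset X) (c₀ : Fin M) (f : ↥S → Fin M) (z : X) : Fin M :=
  if h : z ∈ S then f ⟨z, h⟩ else c₀

lemma sum_pair_le {X : Type*} {M : ℕ} (S : Finset X) (c₀ : Fin M)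
    {x x' : X} (hx : x ∈ S) (hne : x' ≠ x) :
    ∑ f : (↥S → Fin M), (if extf S c₀ f x' = extf S c₀ f x then (1 : ℝ) else 0)
      = (M : ℝ) ^ (S.card - 1) := by
  classical
  set x₀ : ↥S := ⟨x, hx⟩ with hx₀
  set w : ({ j : ↥S // j ≠ x₀ } → Fin M) → Fin M := fun g =>
    if h : x' ∈ S then g ⟨⟨x', h⟩, fun hc => hne (congrArg Subtype.val hc)⟩ else c₀ with hw
  have key : ∀ (p : Fin M × ({ j : ↥S // j ≠ x₀ } → Fin M)),
      (if extf S c₀ ((Equiv.piSplitAt x₀ (fun _ => Fin M)).symm p) x'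
          = extf S c₀ ((Equiv.piSplitAt x₀ (fun _ => Fin M)).symm p) x then (1 : ℝ) else 0)
        = (if w p.2 = p.1 then (1 : ℝ) else 0) := by
    rintro ⟨c, g⟩
    have h1 : extf S c₀ ((Equiv.piSplitAt x₀ (fun _ => Fin M)).symm (c, g)) x = c := by
      simp [extf, hx, Equiv.piSplitAt, hx₀]
    have h2 : extf S c₀ ((Equiv.piSplitAt x₀ (fun _ => Fin M)).symm (c, g)) x' = w g := by
      by_cases h : x' ∈ S
      · have hne' : (⟨x', h⟩ : ↥S) ≠ x₀ := fun hc => hne (congrArg Subtype.val hc)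
        simp [extf, h, Equiv.piSplitAt, hw, hne']
      · simp [extf, h, hw]
    rw [h1, h2]
  rw [← Equiv.sum_comp (Equiv.piSplitAt x₀ (fun _ => Fin M)).symm]
  rw [Fintype.sum_prod_type]
  have : ∀ c : Fin M, ∀ g, (if extf S c₀ ((Equiv.piSplitAt x₀ (fun _ => Fin M)).symm (c, g)) x'
          = extf S c₀ ((Equiv.piSplitAt x₀ (fun _ => Fin M)).symm (c, g)) x then (1 : ℝ) else 0)
        = (if w g = c then (1 : ℝ) else 0) := fun c g => key (c, g)
  calc (∑ c : Fin M, ∑ g, (if extf S c₀ ((Equiv.piSplitAt x₀ (fun _ => Fin M)).symm (c, g)) x'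
          = extf S c₀ ((Equiv.piSplitAt x₀ (fun _ => Fin M)).symm (c, g)) x then (1 : ℝ) else 0))
      = ∑ c : Fin M, ∑ g, (if w g = c then (1 : ℝ) else 0) := by
        refine Finset.sum_congr rfl fun c _ => Finset.sum_congr rfl fun g _ => this c g
    _ = ∑ g : ({ j : ↥S // j ≠ x₀ } → Fin M), ∑ c : Fin M, (if w g = c then (1 : ℝ) else 0) :=
        Finset.sum_comm
    _ = ∑ g : ({ j : ↥S // j ≠ x₀ } → Fin M), 1 := by
        refine Finset.sum_congr rfl fun g _ => ?_
        simp
    _ = (M : ℝ) ^ (S.card - 1) := by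
        rw [Finset.sum_const, Finset.card_univ]
        have hcard : Fintype.card ({ j : ↥S // j ≠ x₀ } → Fin M) = M ^ (S.card - 1) := by
          rw [Fintype.card_fun, Fintype.card_fin]
          congr 1
          rw [Fintype.card_subtype_compl, Fintype.card_subtype_eq, Fintype.card_coe]
        rw [hcard]
        push_cast
        ring

lemma summable_slice {X Y : Type*} {Q : X × Y → ℝ} (hs : Summable Q) (y : Y) :
    Summable fun x => Q (x, y) :=
  hs.comp_injective fun _ _ h => (Prod.ext_iff.1 h).1

lemma exists_tail {X Y : Type*} {P : X × Y → ℝ} (hP : IsPMF P) {δ : ℝ} (hδ : 0 < δ) :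
    ∃ S : Finset X, probOf P {p : X × Y | p.1 ∉ S} ≤ δ := by
  classical
  have hsum : Summable P := summable_of_isPMF hP
  set PX : X → ℝ := fun x => ∑' y, P (x, y) with hPX
  have hPXs : Summable PX := ((summable_prod_of_nonneg (fun p => hP.1 p)).mp hsum).2
  obtain ⟨S, hS⟩ := ((tendsto_order.1 (tendsto_tsum_compl_atTop_zero PX)).2 δ hδ).exists
  refine ⟨S, ?_⟩
  have hind : Summable ({p : X × Y | p.1 ∉ S}.indicator P) := hsum.indicator _
  have h1 : probOf P {p : X × Y | p.1 ∉ S}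
      = ∑' x, ∑' y, ({p : X × Y | p.1 ∉ S}.indicator P) (x, y) := by
    rw [probOf_eq]
    exact Summable.tsum_prod' hind (fun x => hind.comp_injective fun _ _ h => (Prod.ext_iff.1 h).2)
  have h2 : ∀ x, (∑' y, ({p : X × Y | p.1 ∉ S}.indicator P) (x, y))
      = Set.indicator {x : X | x ∉ S} PX x := by
    intro x
    by_cases hx : x ∈ S
    · have : ∀ y : Y, ({p : X × Y | p.1 ∉ S}.indicator P) (x, y) = 0 := by
        intro y
        apply Set.indicator_of_notMem
        simp [hx]
      simp [this, Set.indicator_of_notMem, hx]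
    · have : ∀ y : Y, ({p : X × Y | p.1 ∉ S}.indicator P) (x, y) = P (x, y) := by
        intro y
        apply Set.indicator_of_mem
        simp [hx]
      simp only [this]
      rw [Set.indicator_of_mem (by simp [hx] : x ∈ {x : X | x ∉ S})]
  have h3 : probOf P {p : X × Y | p.1 ∉ S} = ∑' (b : {x : X // x ∉ S}), PX b := by
    rw [h1]
    simp_rw [h2]
    exact (tsum_subtype {x : X | x ∉ S} PX).symm
  rw [h3]
  exact le_of_lt hS


end SWaux

/-- single-shot Slepian–Wolf coding with a mismatched decoder.
The error event on the right side includes the pairs with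
`Q_{X|Y}(x|y) = 0` (where `−log Q_{X|Y}(x|y) = ∞`). -/
theorem slepian_wolf_mismatched
    {X Y : Type*} [Countable X] [Countable Y]
    (PXY QXY : X × Y → ℝ) (hP : IsPMF PXY) (hQ : IsPMF QXY)
    (γ : ℝ) (hγ : 0 < γ) (M : ℕ) (hM : 0 < M) :
    ∃ (e : X → Fin M) (d : Fin M × Y → X),
      probOf PXY {p : X × Y | p.1 ≠ d (e p.1, p.2)} ≤
        probOf PXY {p : X × Y | pcond QXY p = 0 ∨
            Real.logb 2 (M : ℝ) - γ ≤ -Real.logb 2 (pcond QXY p)}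
          + (2 : ℝ) ^ (-γ) := by
  classical
  have hPsum : Summable PXY := SWaux.summable_of_isPMF hP
  have hQsum : Summable QXY := SWaux.summable_of_isPMF hQ
  have hXne : Nonempty X := by
    by_contra h
    rw [not_nonempty_iff] at h
    have h0 : ∑' p : X × Y, PXY p = 0 := tsum_empty
    rw [hP.2] at h0
    norm_num at h0
  haveI : Nonempty (Fin M) := ⟨⟨0, hM⟩⟩
  set cγ : ℝ := (2 : ℝ) ^ γ / M with hcγdef
  have hMR : (0 : ℝ) < M := by exact_mod_cast hM
  have h2γ : (0 : ℝ) < (2 : ℝ) ^ γ := Real.rpow_pos_of_pos two_pos γ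
  have hcγ : 0 < cγ := div_pos h2γ hMR
  have hinv : (2 : ℝ) ^ (-γ) = ((2 : ℝ) ^ γ)⁻¹ := Real.rpow_neg (le_of_lt two_pos) γ
  have hinvpos : (0 : ℝ) < (2 : ℝ) ^ (-γ) := Real.rpow_pos_of_pos two_pos _
  have hpc0 : ∀ p, 0 ≤ pcond QXY p := by
    intro p
    unfold pcond
    split_ifs with h
    · exact div_nonneg (hQ.1 p) (le_of_lt h)
    · exact le_refl 0
  set B : Set (X × Y) := {p : X × Y | pcond QXY p = 0 ∨
      Real.logb 2 (M : ℝ) - γ ≤ -Real.logb 2 (pcond QXY p)} with hBdef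
  set G : Set (X × Y) := {p : X × Y | cγ < pcond QXY p} with hGdef
  have hlogcγ : Real.logb 2 cγ = γ - Real.logb 2 (M : ℝ) := by
    rw [hcγdef, Real.logb_div (ne_of_gt h2γ) (ne_of_gt hMR),
      Real.logb_rpow (by norm_num : (0:ℝ) < 2) (by norm_num : (2:ℝ) ≠ 1)]
  have hBG : ∀ p, p ∉ B ↔ p ∈ G := by
    intro p
    rw [hBdef, hGdef]
    simp only [Set.mem_setOf_eq, not_or, not_le]
    constructor
    · rintro ⟨h0, hlt⟩
      have hpos : 0 < pcond QXY p := lt_of_le_of_ne (hpc0 p) (Ne.symm h0)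
      have hlog : Real.logb 2 cγ < Real.logb 2 (pcond QXY p) := by
        rw [hlogcγ]; linarith
      exact (Real.logb_lt_logb_iff one_lt_two hcγ hpos).mp hlog
    · intro hlt
      have hpos : 0 < pcond QXY p := lt_trans hcγ hlt
      refine ⟨ne_of_gt hpos, ?_⟩
      have hlog := (Real.logb_lt_logb_iff one_lt_two hcγ hpos).mpr hlt
      rw [hlogcγ] at hlog
      linarith
  by_cases htriv : 1 ≤ probOf PXY B + (2 : ℝ) ^ (-γ)
  · exact ⟨fun _ => ⟨0, hM⟩, fun _ => Classical.arbitrary X,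
      le_trans (SWaux.probOf_le_one hP _) htriv⟩
  push_neg at htriv
  have huniv : probOf PXY (Set.univ : Set (X × Y)) = 1 := by
    rw [SWaux.probOf_eq]
    simpa [Set.indicator_univ] using hP.2
  have hPg : (2 : ℝ) ^ (-γ) < probOf PXY G := by
    have hsub : (Set.univ : Set (X × Y)) ⊆ B ∪ G := by
      intro p _
      by_cases h : p ∈ B
      · exact Or.inl h
      · exact Or.inr ((hBG p).mp h)
    have h1 := SWaux.probOf_mono hP hsub
    have h2 := SWaux.probOf_union_le hP B G
    rw [huniv] at h1
    linarith
  set Pg : ℝ := probOf PXY G with hPgdef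
  have hPgpos : 0 < Pg := lt_trans hinvpos hPg
  have hPg1 : Pg ≤ 1 := SWaux.probOf_le_one hP G
  -- the sets T y
  set T : Y → Set X := fun y => {x : X | cγ < pcond QXY (x, y)} with hTdef
  have hsumT : ∀ (y : Y) (s : Finset X), (↑s : Set X) ⊆ T y → (s.card : ℝ) * cγ < 1 := by
    intro y s hs
    rcases s.eq_empty_or_nonempty with rfl | hne
    · simpa using one_pos
    · have hsum1 : ∑ x ∈ s, pcond QXY (x, y) ≤ 1 := by
        by_cases hm : 0 < pmargY QXY y
        · have heach : ∀ x : X, pcond QXY (x, y) = QXY (x, y) / pmargY QXY y :=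
            fun x => if_pos hm
          rw [Finset.sum_congr rfl (fun x _ => heach x), ← Finset.sum_div, div_le_one hm]
          have : ∑ x ∈ s, QXY (x, y) ≤ ∑' x, QXY (x, y) :=
            Summable.sum_le_tsum s (fun x _ => hQ.1 _) (SWaux.summable_slice hQsum y)
          simpa [pmargY] using this
        · have heach : ∀ x : X, pcond QXY (x, y) = 0 := fun x => if_neg hm
          simp [heach]
      have hlt : (s.card : ℝ) * cγ < ∑ x ∈ s, pcond QXY (x, y) := by
        have h := Finset.sum_lt_sum_of_nonempty hne
          (f := fun _ => cγ) (g := fun x => pcond QXY (x, y)) (fun x hx => hs hx)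
        simpa [Finset.sum_const, nsmul_eq_mul] using h
      linarith
  have hTfin : ∀ y, (T y).Finite := by
    intro y
    rw [← Set.not_infinite]
    intro hinf
    obtain ⟨s, hs, hcard⟩ := Set.Infinite.exists_subset_card_eq hinf (⌈cγ⁻¹⌉₊ + 1)
    have h1 := hsumT y s hs
    rw [hcard] at h1
    have h2 : cγ⁻¹ < ((⌈cγ⁻¹⌉₊ + 1 : ℕ) : ℝ) :=
      lt_of_le_of_lt (Nat.le_ceil _) (by push_cast; linarith)
    have h3 : cγ⁻¹ * cγ < ((⌈cγ⁻¹⌉₊ + 1 : ℕ) : ℝ) * cγ :=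
      mul_lt_mul_of_pos_right h2 hcγ
    rw [inv_mul_cancel₀ (ne_of_gt hcγ)] at h3
    linarith
  have hFcard : ∀ y, (((hTfin y).toFinset.card : ℝ)) < (M : ℝ) * (2 : ℝ) ^ (-γ) := by
    intro y
    have h1 := hsumT y (hTfin y).toFinset (by simp)
    rw [hcγdef] at h1
    rw [hinv]
    rw [div_eq_mul_inv, ← mul_assoc] at h1
    have h2 : ((hTfin y).toFinset.card : ℝ) * ((2:ℝ)^γ) * (M:ℝ)⁻¹ * (M:ℝ) < 1 * (M:ℝ) :=
      mul_lt_mul_of_pos_right h1 hMR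
    rw [mul_assoc _ _ (M:ℝ), inv_mul_cancel₀ (ne_of_gt hMR), mul_one, one_mul] at h2
    calc ((hTfin y).toFinset.card : ℝ)
        = ((hTfin y).toFinset.card : ℝ) * ((2:ℝ)^γ) * ((2:ℝ)^γ)⁻¹ := by
          rw [mul_assoc, mul_inv_cancel₀ (ne_of_gt h2γ), mul_one]
      _ < (M : ℝ) * ((2:ℝ)^γ)⁻¹ := by
          exact mul_lt_mul_of_pos_right h2 (inv_pos.mpr h2γ)
    -- slack parameters
  set coef : ℝ := (2 : ℝ) ^ (-γ) - 1 / M with hcoefdef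
  set Bd : ℝ := max 0 (coef * Pg) with hBddef
  set δ : ℝ := (2 : ℝ) ^ (-γ) - Bd with hδdef
  have hBd0 : 0 ≤ Bd := le_max_left _ _
  have hδpos : 0 < δ := by
    rw [hδdef, hBddef]
    rcases le_or_gt coef 0 with h | h
    · have hmax : max 0 (coef * Pg) = 0 :=
        max_eq_left (mul_nonpos_of_nonpos_of_nonneg h (le_of_lt hPgpos))
      rw [hmax]
      simpa using hinvpos
    · have h1 : coef * Pg ≤ coef := by
        nlinarith
      have hmax : max 0 (coef * Pg) ≤ coef := max_le (le_of_lt h) h1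
      have : 0 < 1 / (M : ℝ) := by positivity
      rw [hcoefdef] at hmax
      linarith [hmax]
  obtain ⟨S, hS⟩ := SWaux.exists_tail hP hδpos
  set c₀ : Fin M := Classical.arbitrary (Fin M) with hc₀def
  set A2 : (↥S → Fin M) → Set (X × Y) := fun f =>
    {p : X × Y | p.1 ∈ S ∧ p ∈ G ∧ ∃ x', x' ≠ p.1 ∧ (x', p.2) ∈ G ∧
      SWaux.extf S c₀ f x' = SWaux.extf S c₀ f p.1} with hA2def
  set K' : ℝ := (M : ℝ) ^ (S.card - 1) with hK'def
  have hK'0 : 0 ≤ K' := by positivity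
  set G' : Set (X × Y) := G ∩ {p : X × Y | p.1 ∈ S} with hG'def
  have hPG'0 : 0 ≤ probOf PXY G' := SWaux.probOf_nonneg hP.1 G'
  have hPG'Pg : probOf PXY G' ≤ Pg := SWaux.probOf_mono hP Set.inter_subset_left
  have hkey : ∑ f : ↥S → Fin M, probOf PXY (A2 f)
      ≤ K' * ((M : ℝ) * (2 : ℝ) ^ (-γ) - 1) * probOf PXY G' := by
    have hswap : ∑ f : ↥S → Fin M, probOf PXY (A2 f)
        = ∑' p : X × Y, ∑ f : ↥S → Fin M, (A2 f).indicator PXY p := by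
      simp_rw [SWaux.probOf_eq]
      exact (Summable.tsum_finsetSum (fun f _ => hPsum.indicator _)).symm
    rw [hswap]
    have hle : ∀ p : X × Y, (∑ f : ↥S → Fin M, (A2 f).indicator PXY p)
        ≤ (K' * ((M : ℝ) * (2 : ℝ) ^ (-γ) - 1)) * G'.indicator PXY p := by
      intro p
      by_cases hp : p ∈ G'
      · obtain ⟨hpG, hpS⟩ := hp
        have hpT : p.1 ∈ (hTfin p.2).toFinset := by
          rw [Set.Finite.mem_toFinset]
          exact hpG
        have hpoint : ∀ f : ↥S → Fin M, (A2 f).indicator PXY p ≤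
            (∑ x' ∈ (hTfin p.2).toFinset.erase p.1,
              (if SWaux.extf S c₀ f x' = SWaux.extf S c₀ f p.1 then (1 : ℝ) else 0)) * PXY p := by
          intro f
          by_cases hA : p ∈ A2 f
          · rw [Set.indicator_of_mem hA]
            obtain ⟨-, -, x', hx'ne, hx'G, hx'e⟩ := hA
            have hx'mem : x' ∈ (hTfin p.2).toFinset.erase p.1 := by
              rw [Finset.mem_erase, Set.Finite.mem_toFinset]
              exact ⟨hx'ne, hx'G⟩
            have hone : (1 : ℝ) ≤ ∑ x'' ∈ (hTfin p.2).toFinset.erase p.1,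
                (if SWaux.extf S c₀ f x'' = SWaux.extf S c₀ f p.1 then (1 : ℝ) else 0) := by
              have := Finset.single_le_sum
                (f := fun x'' => (if SWaux.extf S c₀ f x'' = SWaux.extf S c₀ f p.1
                  then (1 : ℝ) else 0))
                (fun i _ => by positivity) hx'mem
              simpa [hx'e] using this
            calc PXY p = 1 * PXY p := (one_mul _).symm
              _ ≤ _ := mul_le_mul_of_nonneg_right hone (hP.1 p)
          · rw [Set.indicator_of_notMem hA]
            have : (0:ℝ) ≤ ∑ x'' ∈ (hTfin p.2).toFinset.erase p.1,
                (if SWaux.extf S c₀ f x'' = SWaux.extf S c₀ f p.1 then (1 : ℝ) else 0) :=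
              Finset.sum_nonneg (fun i _ => by positivity)
            exact mul_nonneg this (hP.1 p)
        have hcerase : (((hTfin p.2).toFinset.erase p.1).card : ℝ)
            ≤ (M : ℝ) * (2 : ℝ) ^ (-γ) - 1 := by
          rw [Finset.card_erase_of_mem hpT]
          have h1 : 1 ≤ (hTfin p.2).toFinset.card := Finset.card_pos.mpr ⟨p.1, hpT⟩
          have : (((hTfin p.2).toFinset.card - 1 : ℕ) : ℝ)
              = ((hTfin p.2).toFinset.card : ℝ) - 1 := by
            push_cast [h1]
            ring
          rw [this]
          linarith [hFcard p.2]
        calc ∑ f : ↥S → Fin M, (A2 f).indicator PXY p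
            ≤ ∑ f : ↥S → Fin M, (∑ x' ∈ (hTfin p.2).toFinset.erase p.1,
              (if SWaux.extf S c₀ f x' = SWaux.extf S c₀ f p.1 then (1 : ℝ) else 0)) * PXY p :=
              Finset.sum_le_sum (fun f _ => hpoint f)
          _ = (∑ f : ↥S → Fin M, ∑ x' ∈ (hTfin p.2).toFinset.erase p.1,
              (if SWaux.extf S c₀ f x' = SWaux.extf S c₀ f p.1 then (1 : ℝ) else 0)) * PXY p := by
              rw [Finset.sum_mul]
          _ = (∑ x' ∈ (hTfin p.2).toFinset.erase p.1, ∑ f : ↥S → Fin M,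
              (if SWaux.extf S c₀ f x' = SWaux.extf S c₀ f p.1 then (1 : ℝ) else 0)) * PXY p := by
              rw [Finset.sum_comm]
          _ = (∑ x' ∈ (hTfin p.2).toFinset.erase p.1, K') * PXY p := by
              congr 1
              refine Finset.sum_congr rfl (fun x' hx' => ?_)
              exact SWaux.sum_pair_le S c₀ hpS (Finset.mem_erase.mp hx').1
          _ = (((hTfin p.2).toFinset.erase p.1).card : ℝ) * K' * PXY p := by
              rw [Finset.sum_const, nsmul_eq_mul]
          _ ≤ (K' * ((M : ℝ) * (2 : ℝ) ^ (-γ) - 1)) * PXY p := by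
              have := mul_le_mul_of_nonneg_right
                (mul_le_mul_of_nonneg_right hcerase hK'0) (hP.1 p)
              calc (((hTfin p.2).toFinset.erase p.1).card : ℝ) * K' * PXY p
                  ≤ ((M : ℝ) * (2 : ℝ) ^ (-γ) - 1) * K' * PXY p := this
                _ = (K' * ((M : ℝ) * (2 : ℝ) ^ (-γ) - 1)) * PXY p := by ring
          _ = (K' * ((M : ℝ) * (2 : ℝ) ^ (-γ) - 1)) * G'.indicator PXY p := by
              rw [Set.indicator_of_mem (Set.mem_inter hpG hpS)]
      · have hz : ∀ f : ↥S → Fin M, (A2 f).indicator PXY p = 0 := by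
          intro f
          refine Set.indicator_of_notMem (fun hA => hp ⟨hA.2.1, hA.1⟩) _
        rw [Set.indicator_of_notMem hp]
        simp [hz]
    have hsumLHS : Summable (fun p : X × Y => ∑ f : ↥S → Fin M, (A2 f).indicator PXY p) :=
      summable_sum (fun f _ => hPsum.indicator _)
    have hsumRHS : Summable (fun p : X × Y =>
        (K' * ((M : ℝ) * (2 : ℝ) ^ (-γ) - 1)) * G'.indicator PXY p) :=
      (hPsum.indicator _).mul_left _
    calc ∑' p : X × Y, ∑ f : ↥S → Fin M, (A2 f).indicator PXY p
        ≤ ∑' p : X × Y, (K' * ((M : ℝ) * (2 : ℝ) ^ (-γ) - 1)) * G'.indicator PXY p :=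
          Summable.tsum_le_tsum hle hsumLHS hsumRHS
      _ = K' * ((M : ℝ) * (2 : ℝ) ^ (-γ) - 1) * probOf PXY G' := by
          rw [tsum_mul_left, SWaux.probOf_eq]
  have hub : K' * ((M : ℝ) * (2 : ℝ) ^ (-γ) - 1) * probOf PXY G'
      ≤ (Fintype.card (↥S → Fin M) : ℝ) * Bd := by
    have hcardΦ : (Fintype.card (↥S → Fin M) : ℝ) = (M : ℝ) ^ S.card := by
      rw [Fintype.card_fun, Fintype.card_fin, Fintype.card_coe]
      push_cast
      ring
    rcases Nat.eq_zero_or_pos S.card with h0 | hpos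
    · have hSempty : S = ∅ := Finset.card_eq_zero.mp h0
      have hG'e : probOf PXY G' = 0 := by
        have he : G' = ∅ := by
          rw [hG'def, hSempty]
          ext p
          simp
        rw [he, SWaux.probOf_eq]
        simp
      rw [hG'e, mul_zero]
      exact mul_nonneg (by positivity) hBd0
    · have hmul : (M : ℝ) * (2 : ℝ) ^ (-γ) - 1 = (M : ℝ) * coef := by
        rw [hcoefdef]
        field_simp
      have hcoe : (M : ℝ) * coef * probOf PXY G' ≤ (M : ℝ) * Bd := by
        rcases le_or_gt 0 coef with hc | hc
        · have h1 : coef * probOf PXY G' ≤ coef * Pg := mul_le_mul_of_nonneg_left hPG'Pg hc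
          have h2 : coef * Pg ≤ Bd := le_max_right _ _
          calc (M : ℝ) * coef * probOf PXY G' = (M : ℝ) * (coef * probOf PXY G') := by ring
            _ ≤ (M : ℝ) * Bd := mul_le_mul_of_nonneg_left (h1.trans h2) hMR.le
        · have h1 : coef * probOf PXY G' ≤ 0 :=
            mul_nonpos_of_nonpos_of_nonneg hc.le hPG'0
          calc (M : ℝ) * coef * probOf PXY G' = (M : ℝ) * (coef * probOf PXY G') := by ring
            _ ≤ (M : ℝ) * 0 := mul_le_mul_of_nonneg_left h1 hMR.le
            _ ≤ (M : ℝ) * Bd := by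
                rw [mul_zero]
                exact mul_nonneg hMR.le hBd0
      calc K' * ((M : ℝ) * (2 : ℝ) ^ (-γ) - 1) * probOf PXY G'
          = K' * ((M : ℝ) * coef * probOf PXY G') := by rw [hmul]; ring
        _ ≤ K' * ((M : ℝ) * Bd) := mul_le_mul_of_nonneg_left hcoe hK'0
        _ = ((M : ℝ) ^ (S.card - 1) * (M : ℝ)) * Bd := by rw [hK'def]; ring
        _ = (M : ℝ) ^ S.card * Bd := by
            rw [← pow_succ, Nat.sub_add_cancel hpos]
        _ = (Fintype.card (↥S → Fin M) : ℝ) * Bd := by rw [hcardΦ]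
  have havg : ∃ f : ↥S → Fin M, probOf PXY (A2 f) ≤ Bd := by
    by_contra hc
    push_neg at hc
    have hgt : (Fintype.card (↥S → Fin M) : ℝ) * Bd
        < ∑ f : ↥S → Fin M, probOf PXY (A2 f) := by
      have h := Finset.sum_lt_sum_of_nonempty (Finset.univ_nonempty)
        (f := fun _ : ↥S → Fin M => Bd) (g := fun f => probOf PXY (A2 f))
        (fun f _ => hc f)
      simpa [Finset.sum_const, Finset.card_univ, nsmul_eq_mul] using h
    linarith [hkey, hub]
  obtain ⟨f, hf⟩ := havg
  set e : X → Fin M := SWaux.extf S c₀ f with hedef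
  set d : Fin M × Y → X := fun q =>
    if h : ∃ x, (x, q.2) ∈ G ∧ e x = q.1 then h.choose else Classical.arbitrary X with hddef
  refine ⟨e, d, ?_⟩
  have hsub : {p : X × Y | p.1 ≠ d (e p.1, p.2)}
      ⊆ B ∪ ({p : X × Y | p.1 ∉ S} ∪ A2 f) := by
    intro p hp
    by_cases hpB : p ∈ B
    · exact Or.inl hpB
    right
    by_cases hpS : p.1 ∈ S
    swap
    · exact Or.inl hpS
    right
    have hpG : p ∈ G := (hBG p).mp hpB
    have hex : ∃ x, (x, p.2) ∈ G ∧ e x = e p.1 := ⟨p.1, by rwa [Prod.mk.eta], rfl⟩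
    have hdval : d (e p.1, p.2) = hex.choose := dif_pos hex
    have hspec := hex.choose_spec
    refine ⟨hpS, hpG, hex.choose, ?_, hspec.1, hspec.2⟩
    intro hcontra
    exact hp (by rw [hdval, hcontra])
  calc probOf PXY {p : X × Y | p.1 ≠ d (e p.1, p.2)}
      ≤ probOf PXY (B ∪ ({p : X × Y | p.1 ∉ S} ∪ A2 f)) := SWaux.probOf_mono hP hsub
    _ ≤ probOf PXY B + probOf PXY ({p : X × Y | p.1 ∉ S} ∪ A2 f) :=
        SWaux.probOf_union_le hP _ _
    _ ≤ probOf PXY B + (probOf PXY {p : X × Y | p.1 ∉ S} + probOf PXY (A2 f)) := by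
        have := SWaux.probOf_union_le hP {p : X × Y | p.1 ∉ S} (A2 f)
        linarith
    _ ≤ probOf PXY B + (δ + Bd) := by
        have := add_le_add hS hf
        linarith
    _ = probOf PXY B + (2 : ℝ) ^ (-γ) := by
        rw [hδdef]
        ring
end
end

section
/- Conditional min-entropy bound for the spectrum slices (key step in the secrecy analysis of the interactive protocol): Let 𝒳, 𝒴, 𝒵 be countable sets and P_{XYZ} a pmf on 𝒳×𝒴×𝒵. Let λ, Δ, λ_i ≥ 0 and L > 0, and let E ⊆ 𝒳×𝒴×𝒵 be a set such that every (x,y,z) ∈ E with P_{XYZ}(x,y,z) > 0 satisfies both P_{X|Z}(x|z) ≤ 2^{−(λ+Δ)}·P_{X|Y}(x|y) and P_{X|Y}(x|y) ≤ 2^{−λ_i}. If p := P_{XYZ}(E) ≥ 1/L², then the (X,Z)-marginal P_{E,XZ} of the conditional pmf P_E(x,y,z) = P_{XYZ}(x,y,z)·1{(x,y,z) ∈ E}/p satisfies H_min(P_{E,XZ} | P_Z) ≥ λ_i + λ + Δ − 2·log L, where H_min(P_{E,XZ} | P_Z) = −log sup_{x,z : P_Z(z)>0} P_{E,XZ}(x,z)/P_Z(z).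 -/
open scoped BigOperators

noncomputable section

attribute [local instance] Classical.propDecidable

def margY {X Y Z : Type*} (P : X × Y × Z → ℝ) : Y → ℝ :=
  fun y => ∑' (x : X) (z : Z), P (x, y, z)

def margZ {X Y Z : Type*} (P : X × Y × Z → ℝ) : Z → ℝ :=
  fun z => ∑' (x : X) (y : Y), P (x, y, z)

def margXY {X Y Z : Type*} (P : X × Y × Z → ℝ) : X × Y → ℝ :=
  fun p => ∑' z : Z, P (p.1, p.2, z)

def margXZ {X Y Z : Type*} (P : X × Y × Z → ℝ) : X × Z → ℝ :=
  fun p => ∑' y : Y, P (p.1, y, p.2)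

/-- The `(X,Z)`-marginal of the conditional pmf `P_E = P·1_E / P(E)`. -/
def condMargXZ {X Y Z : Type*} (P : X × Y × Z → ℝ) (E : Set (X × Y × Z)) :
    X × Z → ℝ :=
  fun p => (∑' y : Y, if (p.1, y, p.2) ∈ E then P (p.1, y, p.2) else 0) / probOf P E

/-- conditional min-entropy bound for the spectrum slices.
The conclusion is `H_min(P_{E,XZ} | P_Z) ≥ λ_i + λ + Δ − 2·log L`, where
`H_min(P_{E,XZ}|P_Z) = −log sup_{x,z : P_Z(z)>0} P_{E,XZ}(x,z)/P_Z(z)`. -/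
theorem slice_min_entropy_bound
    {X Y Z : Type*} [Countable X] [Countable Y] [Countable Z]
    (P : X × Y × Z → ℝ) (hP : IsPMF P)
    (lam Δ lami : ℝ) (hlam : 0 ≤ lam) (hΔ : 0 ≤ Δ) (hlami : 0 ≤ lami)
    (L : ℝ) (hL : 0 < L)
    (E : Set (X × Y × Z))
    -- every (x,y,z) ∈ E in the support satisfies P_{X|Z}(x|z) ≤ 2^{−(λ+Δ)}·P_{X|Y}(x|y)
    (hE1 : ∀ w ∈ E, 0 < P w →
      margXZ P (w.1, w.2.2) / margZ P w.2.2
        ≤ (2 : ℝ) ^ (-(lam + Δ)) * (margXY P (w.1, w.2.1) / margY P w.2.1))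
    -- and P_{X|Y}(x|y) ≤ 2^{−λ_i}
    (hE2 : ∀ w ∈ E, 0 < P w →
      margXY P (w.1, w.2.1) / margY P w.2.1 ≤ (2 : ℝ) ^ (-lami))
    -- p = P(E) ≥ 1/L²
    (hp : 1 / L ^ 2 ≤ probOf P E) :
    lami + lam + Δ - 2 * Real.logb 2 L ≤
      -Real.logb 2 (sSup {r : ℝ | ∃ (x : X) (z : Z), 0 < margZ P z ∧
        r = condMargXZ P E (x, z) / margZ P z}) := by
  obtain ⟨hP0, hP1⟩ := hP
  have hsum : Summable P := by
    by_contra h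
    rw [tsum_eq_zero_of_not_summable h] at hP1; norm_num at hP1
  have hL2 : (0:ℝ) < 1 / L ^ 2 := div_pos one_pos (pow_pos hL 2)
  have hppos : 0 < probOf P E := lt_of_lt_of_le hL2 hp
  have hinvp : 1 / probOf P E ≤ L ^ 2 := by
    have h := one_div_le_one_div_of_le hL2 hp
    rwa [one_div_one_div] at h
  have hCpos : 0 < (2 : ℝ) ^ (-(lami + lam + Δ)) := Real.rpow_pos_of_pos two_pos _
  have hBpos : 0 < (2 : ℝ) ^ (-(lami + lam + Δ)) * L ^ 2 := mul_pos hCpos (pow_pos hL 2)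
  -- summability of slices
  have hslice : ∀ (x : X) (z : Z), Summable fun y : Y => P (x, y, z) := by
    intro x z
    exact hsum.comp_injective (fun y y' h => by
      simpa using congrArg (fun w : X × Y × Z => w.2.1) h)
  have hslice' : ∀ (x : X) (z : Z),
      Summable fun y : Y => if (x, y, z) ∈ E then P (x, y, z) else 0 := by
    intro x z
    refine (hslice x z).of_nonneg_of_le (fun y => ?_) (fun y => ?_)
    · by_cases hy : (x, y, z) ∈ E
      · rw [if_pos hy]; exact hP0 _
      · rw [if_neg hy]
    · by_cases hy : (x, y, z) ∈ E
      · rw [if_pos hy]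
      · rw [if_neg hy]; exact hP0 _
  -- every element of S is at most B
  have hub : ∀ r ∈ {r : ℝ | ∃ (x : X) (z : Z), 0 < margZ P z ∧
      r = condMargXZ P E (x, z) / margZ P z},
      r ≤ (2 : ℝ) ^ (-(lami + lam + Δ)) * L ^ 2 := by
    rintro r ⟨x, z, hz, rfl⟩
    have hcm : condMargXZ P E (x, z)
        = (∑' y : Y, if (x, y, z) ∈ E then P (x, y, z) else 0) / probOf P E := rfl
    have hnum_nonneg : 0 ≤ (∑' y : Y, if (x, y, z) ∈ E then P (x, y, z) else 0) := by
      refine tsum_nonneg (fun y => ?_)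
      by_cases hy : (x, y, z) ∈ E
      · rw [if_pos hy]; exact hP0 _
      · rw [if_neg hy]
    by_cases h : ∃ y, (x, y, z) ∈ E ∧ 0 < P (x, y, z)
    · obtain ⟨y, hyE, hyP⟩ := h
      have h1 := hE1 (x, y, z) hyE hyP
      have h2 := hE2 (x, y, z) hyE hyP
      have hrat : margXZ P (x, z) / margZ P z ≤ (2 : ℝ) ^ (-(lami + lam + Δ)) := by
        calc margXZ P (x, z) / margZ P z
            ≤ (2 : ℝ) ^ (-(lam + Δ)) * (margXY P (x, y) / margY P y) := h1
          _ ≤ (2 : ℝ) ^ (-(lam + Δ)) * (2 : ℝ) ^ (-lami) :=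
              mul_le_mul_of_nonneg_left h2 (Real.rpow_nonneg (by norm_num) _)
          _ = (2 : ℝ) ^ (-(lami + lam + Δ)) := by
              rw [← Real.rpow_add two_pos]; ring_nf
      have hnum_le : (∑' y : Y, if (x, y, z) ∈ E then P (x, y, z) else 0)
          ≤ margXZ P (x, z) := by
        refine Summable.tsum_le_tsum (fun y => ?_) (hslice' x z) (hslice x z)
        by_cases hy : (x, y, z) ∈ E
        · rw [if_pos hy]
        · rw [if_neg hy]; exact hP0 _
      rw [hcm]
      have key : (∑' y : Y, if (x, y, z) ∈ E then P (x, y, z) else 0) / probOf P E / margZ P z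
          = ((∑' y : Y, if (x, y, z) ∈ E then P (x, y, z) else 0) / margZ P z)
            * (1 / probOf P E) := by ring
      rw [key]
      calc ((∑' y : Y, if (x, y, z) ∈ E then P (x, y, z) else 0) / margZ P z)
            * (1 / probOf P E)
          ≤ (2 : ℝ) ^ (-(lami + lam + Δ)) * (1 / probOf P E) := by
            refine mul_le_mul_of_nonneg_right ?_ (one_div_pos.mpr hppos).le
            calc (∑' y : Y, if (x, y, z) ∈ E then P (x, y, z) else 0) / margZ P z
                ≤ margXZ P (x, z) / margZ P z := by gcongr
              _ ≤ (2 : ℝ) ^ (-(lami + lam + Δ)) := hrat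
        _ ≤ (2 : ℝ) ^ (-(lami + lam + Δ)) * L ^ 2 :=
            mul_le_mul_of_nonneg_left hinvp hCpos.le
    · push_neg at h
      have hzero : (∑' y : Y, if (x, y, z) ∈ E then P (x, y, z) else 0) = 0 := by
        have hfun : (fun y : Y => if (x, y, z) ∈ E then P (x, y, z) else 0)
            = fun _ => (0:ℝ) := by
          funext y
          by_cases hy : (x, y, z) ∈ E
          · rw [if_pos hy]; exact le_antisymm ((h y hy)) (hP0 _)
          · rw [if_neg hy]
        rw [hfun, tsum_zero]
      rw [hcm, hzero, zero_div, zero_div]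
      exact hBpos.le
  -- S has a positive element
  have hex : ∃ w ∈ E, 0 < P w := by
    by_contra h
    push_neg at h
    have hz' : probOf P E = 0 := by
      rw [probOf]
      have hfun : (fun a : E => P a) = fun _ => (0:ℝ) := by
        funext a
        exact le_antisymm ((h a a.2)) (hP0 _)
      rw [hfun, tsum_zero]
    rw [hz'] at hppos
    exact lt_irrefl 0 hppos
  obtain ⟨⟨x₀, y₀, z₀⟩, hwE, hwP⟩ := hex
  have hsumxy : Summable fun q : X × Y => P (q.1, q.2, z₀) :=
    hsum.comp_injective (fun q q' h => by
      have h1 := congrArg (fun w : X × Y × Z => w.1) h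
      have h2 := congrArg (fun w : X × Y × Z => w.2.1) h
      simp only at h1 h2
      exact Prod.ext h1 h2)
  have hmz : 0 < margZ P z₀ := by
    have hfac := (summable_prod_of_nonneg (f := fun q : X × Y => P (q.1, q.2, z₀))
      (fun q => hP0 _)).mp hsumxy
    have hle1 : P (x₀, y₀, z₀) ≤ ∑' y, P (x₀, y, z₀) :=
      Summable.le_tsum (hslice x₀ z₀) y₀ (fun _ _ => hP0 _)
    have hle2 : (∑' y, P (x₀, y, z₀)) ≤ ∑' x, ∑' y, P (x, y, z₀) :=
      Summable.le_tsum hfac.2 x₀ (fun _ _ => tsum_nonneg (fun _ => hP0 _))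
    exact lt_of_lt_of_le hwP (le_trans hle1 hle2)
  have hnum0 : 0 < (∑' y : Y, if (x₀, y, z₀) ∈ E then P (x₀, y, z₀) else 0) := by
    have hle := Summable.le_tsum (hslice' x₀ z₀) y₀
      (fun y _ => by
        by_cases hy : (x₀, y, z₀) ∈ E
        · rw [if_pos hy]; exact hP0 _
        · rw [if_neg hy])
    rw [if_pos hwE] at hle
    exact lt_of_lt_of_le hwP hle
  have hr0pos : 0 < condMargXZ P E (x₀, z₀) / margZ P z₀ := by
    have hcm0 : condMargXZ P E (x₀, z₀)
        = (∑' y : Y, if (x₀, y, z₀) ∈ E then P (x₀, y, z₀) else 0) / probOf P E := rfl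
    rw [hcm0]
    exact div_pos (div_pos hnum0 hppos) hmz
  have hmem : condMargXZ P E (x₀, z₀) / margZ P z₀ ∈ {r : ℝ | ∃ (x : X) (z : Z),
      0 < margZ P z ∧ r = condMargXZ P E (x, z) / margZ P z} := ⟨x₀, z₀, hmz, rfl⟩
  have hbdd : BddAbove {r : ℝ | ∃ (x : X) (z : Z), 0 < margZ P z ∧
      r = condMargXZ P E (x, z) / margZ P z} := ⟨_, hub⟩
  have hSpos : 0 < sSup {r : ℝ | ∃ (x : X) (z : Z), 0 < margZ P z ∧
      r = condMargXZ P E (x, z) / margZ P z} :=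
    lt_of_lt_of_le hr0pos (le_csSup hbdd hmem)
  have hSle : sSup {r : ℝ | ∃ (x : X) (z : Z), 0 < margZ P z ∧
      r = condMargXZ P E (x, z) / margZ P z} ≤ (2 : ℝ) ^ (-(lami + lam + Δ)) * L ^ 2 :=
    csSup_le ⟨_, hmem⟩ hub
  have hlog := Real.logb_le_logb_of_le (b := 2) one_lt_two hSpos hSle
  have hlogB : Real.logb 2 ((2 : ℝ) ^ (-(lami + lam + Δ)) * L ^ 2)
      = -(lami + lam + Δ) + 2 * Real.logb 2 L := by
    rw [Real.logb_mul (ne_of_gt hCpos) (by positivity),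
      Real.logb_rpow two_pos (by norm_num), Real.logb_pow]
    push_cast; ring
  rw [hlogB] at hlog
  linarith
end
end
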